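/- Let G be a finite simple bipartite graph, let k ≥ 1 and t be natural numbers, let T1 and T2 be disjoint subsets of V(G) with T1 ∪ T2 nonempty and |T1| + |T2| ≤ t, and let Y ⊆ V(G) be a well-connected set in G of size at least 2·(4k²)·t·4^(4k²) + 2. Let G* be the graph obtained from G by adding a new vertex y* adjacent to exactly the vertices of Y, and let Z be the union, over all x ∈ T1 ∪ T2, of all (x,y*)-important sets X in G* with d_{G*}(X) ≤ 4k². Let uv be an edge of G with u ∉ Z and v ∉ Z such that G − uv is connected. Then G has a (T1,T2)-extension of cost at most k if and only if G − uv has a (T1,T2)-extension of cost at most k. -/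

import Mathlib

open scoped Classical

variable {V : Type*}

/-- The spanning subgraph of `G` whose edges are the *bad* edges w.r.t. the
2-coloring `φ` (edges whose endpoints get the same color). -/
def badGraph (G : SimpleGraph V) (φ : V → Fin 2) : SimpleGraph V where
  Adj u v := G.Adj u v ∧ φ u = φ v
  symm := ⟨fun u v h => ⟨h.1.symm, h.2.symm⟩⟩
  loopless := ⟨fun v h => G.loopless.irrefl v h.1⟩

/-- The spanning subgraph of `G` whose edges are the *good* edges w.r.t. the
2-coloring `φ` (edges whose endpoints get different colors). -/
def goodGraph (G : SimpleGraph V) (φ : V → Fin 2) : SimpleGraph V where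
  Adj u v := G.Adj u v ∧ φ u ≠ φ v
  symm := ⟨fun u v h => ⟨h.1.symm, Ne.symm h.2⟩⟩
  loopless := ⟨fun v h => G.loopless.irrefl v h.1⟩

/-- `X` is a monochromatic component of the 2-coloring `φ` of `G`: the vertex set of a
connected component of the subgraph of `G` induced by one of the two color classes. -/
def IsMonochromaticComponent (G : SimpleGraph V) (φ : V → Fin 2) (X : Set V) : Prop :=
  ∃ (i : Fin 2) (c : (SimpleGraph.induce (φ ⁻¹' {i}) G).ConnectedComponent),
    X = Subtype.val '' c.supp

/-- `X` is a good component of the 2-coloring `φ` of `G`: the vertex set of a connected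
component of the spanning subgraph of `G` consisting of the good edges. -/
def IsGoodComponent (G : SimpleGraph V) (φ : V → Fin 2) (X : Set V) : Prop :=
  ∃ c : (goodGraph G φ).ConnectedComponent, X = c.supp

/-- The cost of a 2-coloring `φ` of `G`: the sum, over all monochromatic components `X`
of `φ`, of `|X| - 1`. -/
noncomputable def cost (G : SimpleGraph V) (φ : V → Fin 2) : ℕ :=
  ∑ᶠ X ∈ {X : Set V | IsMonochromaticComponent G φ X}, (Nat.card X - 1)

/-- A 2-coloring is a `(T₁,T₂)`-extension if it colors every vertex of `T₁` with the first
color and every vertex of `T₂` with the second color. -/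
def IsExtension (φ : V → Fin 2) (T1 T2 : Set V) : Prop :=
  (∀ x ∈ T1, φ x = 0) ∧ (∀ x ∈ T2, φ x = 1)

/-- A cheapest `(T₁,T₂)`-extension of `G`: no `(T₁,T₂)`-extension has strictly smaller cost. -/
noncomputable def IsCheapestExtension (G : SimpleGraph V) (φ : V → Fin 2)
    (T1 T2 : Set V) : Prop :=
  IsExtension φ T1 T2 ∧ ∀ ψ : V → Fin 2, IsExtension ψ T1 T2 → cost G φ ≤ cost G ψ

/-- `X` is `p`-connected in `G`: `|X| ≥ p` and for all subsets `X₁, X₂ ⊆ X` with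
`|X₁| = |X₂| ≤ p` there are `|X₁|` pairwise vertex-disjoint paths in `G`, each with one
endpoint in `X₁` and the other endpoint in `X₂`. -/
def PConnected (G : SimpleGraph V) (p : ℕ) (X : Set V) : Prop :=
  p ≤ Nat.card X ∧
  ∀ X1 X2 : Finset V, ↑X1 ⊆ X → ↑X2 ⊆ X → X1.card = X2.card → X1.card ≤ p →
    ∃ (a b : Fin X1.card → V) (w : ∀ i, G.Walk (a i) (b i)),
      (∀ i, (w i).IsPath) ∧ (∀ i, a i ∈ X1) ∧ (∀ i, b i ∈ X2) ∧
      ∀ i j, i ≠ j → ∀ x, x ∈ (w i).support → x ∉ (w j).support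

/-- `X` is well-connected in `G` if it is `(|X|/2)`-connected. -/
def WellConnected (G : SimpleGraph V) (X : Set V) : Prop :=
  PConnected G (Nat.card X / 2) X

/-- `d_G(X)`: the number of edges of `G` with exactly one endpoint in `X`. -/
noncomputable def cutCard (G : SimpleGraph V) (X : Set V) : ℕ :=
  Nat.card {e : Sym2 V | e ∈ G.edgeSet ∧ ∃ a b, e = s(a, b) ∧ a ∈ X ∧ b ∉ X}

/-- `X` is an `(x,y)`-important set in `G`. -/
noncomputable def ImportantSet (G : SimpleGraph V) (x y : V) (X : Set V) : Prop :=
  x ∈ X ∧ y ∉ X ∧ (SimpleGraph.induce X G).Connected ∧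
  ¬ ∃ X' : Set V, X ⊂ X' ∧ y ∉ X' ∧ (SimpleGraph.induce X' G).Connected ∧
      cutCard G X' ≤ cutCard G X

/-- `G` has a tree decomposition of width at most `w`. -/
def HasTreewidthAtMost (G : SimpleGraph V) (w : ℕ) : Prop :=
  ∃ (n : ℕ) (T : SimpleGraph (Fin n)) (bag : Fin n → Finset V),
    T.IsTree ∧
    (∀ v : V, ∃ i, v ∈ bag i) ∧
    (∀ u v : V, G.Adj u v → ∃ i, u ∈ bag i ∧ v ∈ bag i) ∧
    (∀ v : V, (SimpleGraph.induce {i | v ∈ bag i} T).Connected) ∧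
    (∀ i, (bag i).card ≤ w + 1)

/-- The treewidth of `G`: the minimum width over all tree decompositions of `G`. -/
noncomputable def treewidth (G : SimpleGraph V) : ℕ :=
  sInf {w | HasTreewidthAtMost G w}

/-- The graph `G/S` obtained from `G` by contracting the edges of `S`: its vertices are the
connected components of the graph `(V(G), S)`, two distinct components being adjacent iff
`G` has an edge with one endpoint in each of them. -/
def contractEdges (G : SimpleGraph V) (S : Set (Sym2 V)) :
    SimpleGraph (SimpleGraph.fromEdgeSet S).ConnectedComponent where
  Adj c d := c ≠ d ∧ ∃ u v : V, G.Adj u v ∧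
      (SimpleGraph.fromEdgeSet S).connectedComponentMk u = c ∧
      (SimpleGraph.fromEdgeSet S).connectedComponentMk v = d
  symm := by
    constructor
    rintro c d ⟨hcd, u, v, ha, hu, hv⟩
    exact ⟨hcd.symm, v, u, ha.symm, hv, hu⟩
  loopless := ⟨fun c h => h.1 rfl⟩

/-- The graph `G*` obtained from `G` by adding a new vertex (here `none`) adjacent to
exactly the vertices of `Y`. -/
def addApex (G : SimpleGraph V) (Y : Set V) : SimpleGraph (Option V) :=
  SimpleGraph.fromRel (fun a b =>
    (∃ u v : V, a = some u ∧ b = some v ∧ G.Adj u v) ∨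
    (∃ u : V, a = some u ∧ b = none ∧ u ∈ Y))

/-- The set `Z`: the union, over all `x ∈ T`, of all `(x, y*)`-important sets `X` in
`G* = addApex G Y` with `d_{G*}(X) ≤ p`. -/
noncomputable def importantUnion (G : SimpleGraph V) (Y : Set V) (T : Set V) (p : ℕ) :
    Set (Option V) :=
  {w | ∃ x ∈ T, ∃ X : Set (Option V),
    ImportantSet (addApex G Y) (some x) none X ∧ cutCard (addApex G Y) X ≤ p ∧ w ∈ X}

open SimpleGraph

/-!
Only the direction from `G - uv` to `G` needs an argument, and only when a witness `φ` of cost at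
most `k` for `G - uv` colours `u` and `v` alike. The bad edges of `φ` lie inside monochromatic
components of total size at most `2k`, so there are fewer than `2k²` of them. Fix a proper
2-colouring `c` of `G` and let `D` be the set where `φ` disagrees with `c`: every edge of `G - uv`
leaving `D` is bad, so by well-connectedness `Y` has few vertices on one side of `D`, and swapping
the colours of `c` we may assume that side is `D`. As `c u ≠ c v`, one of `u, v`, say `u`, lies in
`D`. The component `A` of `u` in `G[D]` has at most `4k²` edges leaving it in `G*` (bad edges,
`uv`, and edges from `Y ∩ D` to `y*`); if `A` contained a terminal `x`, a maximal enlargement of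
`A` would be an `(x, y*)`-important set putting `u` into `Z`. So recolouring `A` by `c` keeps the
terminal colours, and it makes every edge at `A` good, so the new colouring of `G` has no bad edge
that is not a bad edge of `φ` in `G - uv`, and its cost is at most that of `φ`.
-/

section Cost

variable {G G' : SimpleGraph V} {φ ψ : V → Fin 2}

theorem badGraph_le : badGraph G φ ≤ G := fun _ _ h => h.1

theorem badGraph_mono (h : G ≤ G') : badGraph G φ ≤ badGraph G' φ := fun _ _ hab => ⟨h hab.1, hab.2⟩

theorem color_eq_of_reachable_badGraph {a b : V} (h : (badGraph G φ).Reachable a b) :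
    φ a = φ b := by
  obtain ⟨p⟩ := h
  induction p with
  | nil => rfl
  | cons hadj _ ih => exact hadj.2.trans ih

theorem reachable_induce_colorClass_iff {i : Fin 2} {a b : V} (ha : φ a = i) (hb : φ b = i) :
    (G.induce (φ ⁻¹' {i})).Reachable ⟨a, ha⟩ ⟨b, hb⟩ ↔ (badGraph G φ).Reachable a b := by
  constructor
  · exact fun h => h.map (⟨Subtype.val, fun {x y} hxy => ⟨hxy, x.2.trans y.2.symm⟩⟩ :
      G.induce (φ ⁻¹' {i}) →g badGraph G φ)
  · rintro ⟨p⟩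
    have hp : ∀ x ∈ (p.mapLe badGraph_le).support, x ∈ φ ⁻¹' {i} := fun x hx =>
      (color_eq_of_reachable_badGraph ⟨(p.takeUntil x (by simpa using hx))⟩).symm.trans ha
    exact ⟨(p.mapLe badGraph_le).induce _ hp⟩

theorem image_val_supp_induce_colorClass {i : Fin 2} {z : V} (hz : φ z = i) :
    Subtype.val '' ((G.induce (φ ⁻¹' {i})).connectedComponentMk ⟨z, hz⟩).supp =
      ((badGraph G φ).connectedComponentMk z).supp := by
  ext y
  simp only [Set.mem_image, ConnectedComponent.mem_supp_iff, ConnectedComponent.eq,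
    Subtype.exists, exists_and_right, exists_eq_right]
  constructor
  · rintro ⟨hy, h⟩
    exact (reachable_induce_colorClass_iff hy hz).1 h
  · intro h
    have hy : φ y = i := (color_eq_of_reachable_badGraph h).trans hz
    exact ⟨hy, (reachable_induce_colorClass_iff hy hz).2 h⟩

theorem isMonochromaticComponent_iff {X : Set V} :
    IsMonochromaticComponent G φ X ↔ ∃ c : (badGraph G φ).ConnectedComponent, X = c.supp := by
  constructor
  · rintro ⟨i, c, rfl⟩
    induction c using ConnectedComponent.ind with
    | h z => exact ⟨_, image_val_supp_induce_colorClass z.2⟩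
  · rintro ⟨c, rfl⟩
    induction c using ConnectedComponent.ind with
    | h z => exact ⟨φ z, _, (image_val_supp_induce_colorClass (rfl : φ z = φ z)).symm⟩

theorem cost_eq_finsum :
    cost G φ = ∑ᶠ c : (badGraph G φ).ConnectedComponent, (Nat.card c.supp - 1) := by
  have : {X | IsMonochromaticComponent G φ X} =
      Set.range (ConnectedComponent.supp (G := badGraph G φ)) := by
    ext X
    simp [isMonochromaticComponent_iff, eq_comm]
  rw [cost, this, finsum_mem_range ConnectedComponent.supp_injective]

theorem card_eq_sum_card_supp [Finite V] (H : SimpleGraph V) [Fintype H.ConnectedComponent] :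
    Nat.card V = ∑ c : H.ConnectedComponent, Nat.card c.supp := by
  rw [Nat.card_congr (Equiv.sigmaFiberEquiv H.connectedComponentMk).symm, Nat.card_sigma]
  rfl

theorem cost_add_card_connectedComponent [Finite V] :
    cost G φ + Nat.card (badGraph G φ).ConnectedComponent = Nat.card V := by
  have := Fintype.ofFinite (badGraph G φ).ConnectedComponent
  rw [cost_eq_finsum, finsum_eq_sum_of_fintype, Nat.card_eq_fintype_card, Fintype.card,
    Finset.card_eq_sum_ones, ← Finset.sum_add_distrib, card_eq_sum_card_supp (badGraph G φ)]
  refine Finset.sum_congr rfl fun c _ => Nat.sub_add_cancel ?_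
  have := c.nonempty_supp.to_subtype
  exact Nat.card_pos

theorem cost_le_cost_of_badGraph_le [Finite V] (h : badGraph G φ ≤ badGraph G' ψ) :
    cost G φ ≤ cost G' ψ := by
  have := ConnectedComponent.card_le_card_of_le h
  have := cost_add_card_connectedComponent (G := G) (φ := φ)
  have := cost_add_card_connectedComponent (G := G') (φ := ψ)
  omega

theorem card_support_badGraph_le [Finite V] :
    Nat.card (badGraph G φ).support ≤ 2 * cost G φ := by
  set B := badGraph G φ
  have := Fintype.ofFinite B.ConnectedComponent
  have hfiber : ∀ c : B.ConnectedComponent,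
      Nat.card {x : B.support // B.connectedComponentMk x = c} ≤ 2 * (Nat.card c.supp - 1) := by
    intro c
    rcases isEmpty_or_nonempty {x : B.support // B.connectedComponentMk x = c} with h | h
    · simp
    obtain ⟨⟨⟨x, y, hxy⟩, rfl⟩⟩ := h
    replace hxy : B.Adj x y := hxy
    change Nat.card {z : B.support // B.connectedComponentMk z = B.connectedComponentMk x} ≤
      2 * (Nat.card (B.connectedComponentMk x).supp - 1)
    have hle : Nat.card {z : B.support // B.connectedComponentMk z = B.connectedComponentMk x} ≤
        Nat.card (B.connectedComponentMk x).supp :=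
      Nat.card_le_card_of_injective (fun z => ⟨z.1.1, z.2⟩)
        fun a b h => Subtype.ext (Subtype.ext (congrArg Subtype.val h :))
    have htwo : 1 < Nat.card (B.connectedComponentMk x).supp := by
      rw [Nat.card_coe_set_eq, Set.one_lt_ncard_iff]
      exact ⟨x, y, rfl, ConnectedComponent.connectedComponentMk_eq_of_adj hxy.symm, hxy.ne⟩
    omega
  rw [cost_eq_finsum, finsum_eq_sum_of_fintype, Finset.mul_sum,
    Nat.card_congr (Equiv.sigmaFiberEquiv fun x : B.support => B.connectedComponentMk x).symm,
    Nat.card_sigma]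
  exact Finset.sum_le_sum fun c _ => hfiber c

theorem card_edgeSet_badGraph_le [Finite V] :
    Nat.card (badGraph G φ).edgeSet ≤ (2 * cost G φ).choose 2 := by
  have := Fintype.ofFinite V
  set B := badGraph G φ
  have hsub : B.edgeSet ⊆ ↑(B.support.toFinset.offDiag.image Sym2.mk.uncurry) := by
    intro e he
    induction e with
    | h a b =>
      replace he : B.Adj a b := he
      simp only [Finset.coe_image, Finset.coe_offDiag, Set.coe_toFinset]
      exact ⟨(a, b), ⟨⟨b, he⟩, ⟨a, he.symm⟩, he.ne⟩, rfl⟩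
  calc Nat.card B.edgeSet ≤ (B.support.toFinset.offDiag.image Sym2.mk.uncurry).card := by
        rw [Nat.card_coe_set_eq, ← Set.ncard_coe_finset]
        exact Set.ncard_le_ncard hsub
    _ = B.support.toFinset.card.choose 2 := Sym2.card_image_offDiag _
    _ ≤ (2 * cost G φ).choose 2 := by
        refine Nat.choose_le_choose 2 ?_
        rw [Set.toFinset_card, ← Nat.card_eq_fintype_card]
        exact card_support_badGraph_le

theorem Nat.two_mul_choose_two_add_two_mul (k : ℕ) :
    2 * (2 * k).choose 2 + 2 * k = 4 * k ^ 2 := by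
  rw [Nat.choose_two_right, Nat.two_mul_div_two_of_even (Nat.even_mul_pred_self _)]
  cases k with
  | zero => rfl
  | succ k =>
    rw [show 2 * (k + 1) - 1 = 2 * k + 1 by omega]
    ring

theorem two_mul_card_edgeSet_badGraph_add_two_le [Finite V] {k : ℕ} (hk : 1 ≤ k)
    (hcost : cost G φ ≤ k) :
    2 * Nat.card (badGraph G φ).edgeSet + 2 ≤ 4 * k ^ 2 := by
  have : Nat.card (badGraph G φ).edgeSet ≤ (2 * k).choose 2 :=
    card_edgeSet_badGraph_le.trans (Nat.choose_le_choose 2 (Nat.mul_le_mul_left 2 hcost))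
  have := Nat.two_mul_choose_two_add_two_mul k
  omega

end Cost

theorem SimpleGraph.Connected.induce_image {W : Type*} {G : SimpleGraph V} {H : SimpleGraph W}
    (f : G →g H) {s : Set V} (h : (G.induce s).Connected) : (H.induce (f '' s)).Connected :=
  h.map (induceHom f (Set.mapsTo_image f s)) fun ⟨_, x, hx, hfx⟩ => ⟨⟨x, hx⟩, Subtype.ext hfx⟩

theorem exists_importantSet_superset {W : Type*} [Finite W] (H : SimpleGraph W) {x y : W}
    {X : Set W} (hX : (H.induce X).Connected) (hx : x ∈ X) (hy : y ∉ X) :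
    ∃ X', X ⊆ X' ∧ ImportantSet H x y X' ∧ cutCard H X' ≤ cutCard H X := by
  obtain ⟨M, ⟨hXM, hyM, hM, hcut⟩, hmax⟩ := (Set.toFinite {X' | X ⊆ X' ∧ y ∉ X' ∧
    (H.induce X').Connected ∧ cutCard H X' ≤ cutCard H X}).exists_maximal
    ⟨X, subset_rfl, hy, hX, le_rfl⟩
  refine ⟨M, hXM, ⟨hXM hx, hyM, hM, ?_⟩, hcut⟩
  rintro ⟨X', hMX', hyX', hX', hcut'⟩
  exact hMX'.2 (hmax ⟨hXM.trans hMX'.1, hyX', hX', hcut'.trans hcut⟩ hMX'.1)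

section Apex

variable {G : SimpleGraph V} {Y : Set V}

@[simp]
theorem addApex_adj_some_some {a b : V} : (addApex G Y).Adj (some a) (some b) ↔ G.Adj a b := by
  simpa [addApex, G.adj_comm b a] using G.ne_of_adj

@[simp]
theorem addApex_adj_some_none {a : V} : (addApex G Y).Adj (some a) none ↔ a ∈ Y := by
  simp [addApex]

def addApexHom : G →g addApex G Y := ⟨some, addApex_adj_some_some.2⟩

theorem cutCard_addApex_image_le [Finite V] (A : Set V) :
    cutCard (addApex G Y) (some '' A) ≤ cutCard G A + Nat.card ↥(Y ∩ A) := by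
  simp only [cutCard, Nat.card_coe_set_eq]
  refine (Set.ncard_le_ncard (t := Sym2.map some ''
    {e | e ∈ G.edgeSet ∧ ∃ a b, e = s(a, b) ∧ a ∈ A ∧ b ∉ A} ∪
    (fun y => s(some y, none)) '' (Y ∩ A)) ?_).trans ((Set.ncard_union_le _ _).trans
    (add_le_add (Set.ncard_image_le (Set.toFinite _)) (Set.ncard_image_le (Set.toFinite _))))
  rintro e ⟨he, a, b, rfl, ⟨a, ha, rfl⟩, hb⟩
  cases b with
  | none => exact Or.inr ⟨a, ⟨addApex_adj_some_none.1 he, ha⟩, rfl⟩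
  | some b => exact Or.inl ⟨s(a, b), ⟨addApex_adj_some_some.1 he, a, b, rfl, ha,
      fun hb' => hb ⟨b, hb', rfl⟩⟩, rfl⟩

theorem disjoint_of_notMem_importantUnion [Finite V] {T A : Set V} {p : ℕ} {u : V}
    (hA : (G.induce A).Connected) (huA : u ∈ A) (hcut : cutCard (addApex G Y) (some '' A) ≤ p)
    (hu : some u ∉ importantUnion G Y T p) : Disjoint A T := by
  refine Set.disjoint_left.2 fun x hxA hxT => ?_
  obtain ⟨X, hAX, hX, hXcut⟩ := exists_importantSet_superset (addApex G Y) (y := none)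
    (hA.induce_image addApexHom) ⟨x, hxA, rfl⟩ fun ⟨_, _, h⟩ => Option.some_ne_none _ h
  exact hu ⟨x, hxT, X, hX, hXcut.trans hcut, hAX ⟨u, huA, rfl⟩⟩

end Apex

theorem Set.exists_finset_subset_card_eq [Finite V] {S : Set V} {n : ℕ} (h : n ≤ Nat.card S) :
    ∃ X : Finset V, ↑X ⊆ S ∧ X.card = n := by
  rw [Nat.card_coe_set_eq, Set.ncard_eq_toFinset_card S] at h
  obtain ⟨X, hXS, hX⟩ := Finset.exists_subset_card_eq h
  exact ⟨X, fun x hx => (Set.Finite.mem_toFinset _).1 (hXS hx), hX⟩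

theorem WellConnected.card_inter_le_or_card_diff_le [Finite V] {G : SimpleGraph V} {Y : Set V}
    (hY : WellConnected G Y) {D : Set V} {u : V} {F : Set (Sym2 V)}
    (hF : ∀ x y, G.Adj x y → x ∈ D → y ∉ D → x ≠ u → y ≠ u → s(x, y) ∈ F)
    (hYcard : 2 * (Nat.card F + 2) ≤ Nat.card Y) :
    Nat.card ↥(Y ∩ D) ≤ Nat.card F + 1 ∨ Nat.card ↥(Y \ D) ≤ Nat.card F + 1 := by
  by_contra! h
  obtain ⟨X₁, hX₁, hX₁card⟩ := Set.exists_finset_subset_card_eq (n := Nat.card F + 2) h.1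
  obtain ⟨X₂, hX₂, hX₂card⟩ := Set.exists_finset_subset_card_eq (n := Nat.card F + 2) h.2
  obtain ⟨a, b, w, -, ha, hb, hdisj⟩ := hY.2 X₁ X₂ (hX₁.trans Set.inter_subset_left)
    (hX₂.trans Set.sdiff_subset) (hX₁card.trans hX₂card.symm) (by omega)
  choose d hd hdD hdD' using fun i => (w i).exists_boundary_dart D (hX₁ (ha i)).2 (hX₂ (hb i)).2
  have hsupp : ∀ i j, (d i).edge = (d j).edge → (d i).fst ∈ (w j).support := by
    intro i j h
    rcases Sym2.eq_iff.1 h with ⟨h1, -⟩ | ⟨h1, -⟩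
    · exact h1 ▸ (w j).dart_fst_mem_support_of_mem_darts (hd j)
    · exact h1 ▸ (w j).dart_snd_mem_support_of_mem_darts (hd j)
  -- At most one of the disjoint paths passes through `u`; each other one uses its own edge of `F`.
  have hthrough : {i | u ∈ (w i).support}.ncard ≤ 1 :=
    (Set.ncard_le_one_iff).2 fun {i j} hi hj => by_contra fun hij => hdisj i j hij u hi hj
  have havoid : {i | u ∉ (w i).support}.ncard ≤ F.ncard := by
    refine Set.ncard_le_ncard_of_injOn (fun i => (d i).edge) (fun i hi => ?_) (fun i _ j _ h => ?_)
    · exact hF _ _ (d i).adj (hdD i) (hdD' i)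
        (fun h => hi (h ▸ (w i).dart_fst_mem_support_of_mem_darts (hd i)))
        (fun h => hi (h ▸ (w i).dart_snd_mem_support_of_mem_darts (hd i)))
    · exact by_contra fun hij => hdisj i j hij _ ((w i).dart_fst_mem_support_of_mem_darts (hd i))
        (hsupp i j h)
  have := Set.ncard_add_ncard_compl {i | u ∈ (w i).support}
  rw [Set.compl_ofPred, Nat.card_fin] at this
  rw [Nat.card_coe_set_eq] at hX₁card
  omega

theorem SimpleGraph.exists_connected_closed_of_mem (G : SimpleGraph V) {D : Set V} {u : V}
    (hu : u ∈ D) :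
    ∃ A ⊆ D, u ∈ A ∧ (G.induce A).Connected ∧ ∀ x y, x ∈ A → G.Adj x y → y ∈ D → y ∈ A := by
  set C := (G.induce D).connectedComponentMk ⟨u, hu⟩
  refine ⟨Subtype.val '' C.supp, ?_, ⟨⟨u, hu⟩, rfl, rfl⟩, ?_, ?_⟩
  · rintro _ ⟨x, -, rfl⟩
    exact x.2
  · exact C.maximal_connected_induce_supp.1.induce_image (Embedding.induce D).toHom
  · rintro _ y ⟨x, hx, rfl⟩ hxy hy
    exact ⟨⟨y, hy⟩, C.mem_supp_of_adj_mem_supp hx hxy, rfl⟩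

section Recolor

variable {G : SimpleGraph V} {φ c : V → Fin 2}

theorem badGraph_deleteEdges_adj {u v a b : V} :
    (badGraph (G.deleteEdges {s(u, v)}) φ).Adj a b ↔
      (badGraph G φ).Adj a b ∧ s(a, b) ≠ s(u, v) := by
  simp only [badGraph, deleteEdges_adj, Set.mem_singleton_iff]
  tauto

theorem badGraph_le_badGraph_deleteEdges {u v : V} (h : φ u ≠ φ v) :
    badGraph G φ ≤ badGraph (G.deleteEdges {s(u, v)}) φ := by
  rintro a b ⟨hab, heq⟩
  refine badGraph_deleteEdges_adj.2 ⟨⟨hab, heq⟩, fun he => h ?_⟩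
  rcases Sym2.eq_iff.1 he with ⟨rfl, rfl⟩ | ⟨rfl, rfl⟩
  exacts [heq, heq.symm]

theorem eq_of_adj_of_ne_of_eq (hc : ∀ a b, G.Adj a b → c a ≠ c b) {x y : V} (hxy : G.Adj x y)
    (hx : φ x ≠ c x) (hy : φ y = c y) : φ x = φ y := by
  have key : ∀ p q r : Fin 2, p ≠ q → q ≠ r → p = r := by decide
  exact hy ▸ key _ _ _ hx (hc x y hxy)

theorem mem_edgeSet_badGraph_deleteEdges (hc : ∀ a b, G.Adj a b → c a ≠ c b) {x y u v : V}
    (hxy : G.Adj x y) (hx : φ x ≠ c x) (hy : φ y = c y) (hne : s(x, y) ≠ s(u, v)) :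
    s(x, y) ∈ (badGraph (G.deleteEdges {s(u, v)}) φ).edgeSet :=
  badGraph_deleteEdges_adj.2 ⟨⟨hxy, eq_of_adj_of_ne_of_eq hc hxy hx hy⟩, hne⟩

theorem cutCard_le_card_edgeSet_badGraph_add_one [Finite V] (hc : ∀ a b, G.Adj a b → c a ≠ c b)
    {A : Set V} (hA : A ⊆ {x | φ x ≠ c x})
    (hclosed : ∀ x y, x ∈ A → G.Adj x y → φ y ≠ c y → y ∈ A) (u v : V) :
    cutCard G A ≤ Nat.card (badGraph (G.deleteEdges {s(u, v)}) φ).edgeSet + 1 := by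
  rw [cutCard, Nat.card_coe_set_eq, Nat.card_coe_set_eq]
  refine (Set.ncard_le_ncard (t := insert s(u, v) _) ?_).trans (Set.ncard_insert_le _ _)
  rintro _ ⟨hxy, x, y, rfl, hx, hy⟩
  by_cases hne : s(x, y) = s(u, v)
  · exact Or.inl hne
  · exact Or.inr (mem_edgeSet_badGraph_deleteEdges hc hxy (hA hx)
      (not_not.1 fun h => hy (hclosed x y hx hxy h)) hne)

theorem badGraph_piecewise_le (hc : ∀ a b, G.Adj a b → c a ≠ c b) {A : Set V}
    (hclosed : ∀ x y, x ∈ A → G.Adj x y → φ y ≠ c y → y ∈ A) {u v : V} (hu : u ∈ A) :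
    badGraph G (A.piecewise c φ) ≤ badGraph (G.deleteEdges {s(u, v)}) φ := by
  have hout : ∀ x y, x ∈ A → y ∉ A → G.Adj x y → φ y = c y := fun x y hx hy hxy =>
    not_not.1 fun h => hy (hclosed x y hx hxy h)
  rintro a b ⟨hab, heq⟩
  by_cases ha : a ∈ A <;> by_cases hb : b ∈ A <;>
    simp only [Set.piecewise, ha, hb, if_true, if_false] at heq
  · exact absurd heq (hc a b hab)
  · exact absurd (heq.trans (hout a b ha hb hab)) (hc a b hab)
  · exact absurd ((hout b a hb ha hab.symm).symm.trans heq) (hc a b hab)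
  · refine badGraph_deleteEdges_adj.2 ⟨⟨hab, heq⟩, fun he => ?_⟩
    rcases Sym2.eq_iff.1 he with ⟨rfl, -⟩ | ⟨-, rfl⟩
    exacts [ha hu, hb hu]

end Recolor

theorem IsExtension.piecewise {φ c : V → Fin 2} {T1 T2 A : Set V} (hφ : IsExtension φ T1 T2)
    (hA : Disjoint A (T1 ∪ T2)) : IsExtension (A.piecewise c φ) T1 T2 := by
  have h : ∀ x ∈ T1 ∪ T2, A.piecewise c φ x = φ x := fun x hx =>
    Set.piecewise_eq_of_notMem _ _ _ (Set.disjoint_right.1 hA hx)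
  exact ⟨fun x hx => (h x (.inl hx)).trans (hφ.1 x hx),
    fun x hx => (h x (.inr hx)).trans (hφ.2 x hx)⟩

theorem exists_extension_cost_le_of_deleteEdges [Finite V] {G : SimpleGraph V} {Y T1 T2 : Set V}
    {k p : ℕ} {u v : V} {φ c : V → Fin 2} (hc : ∀ a b, G.Adj a b → c a ≠ c b)
    (hφ : IsExtension φ T1 T2) (hcost : cost (G.deleteEdges {s(u, v)}) φ ≤ k) (huc : φ u ≠ c u)
    (hp : Nat.card (badGraph (G.deleteEdges {s(u, v)}) φ).edgeSet + 1 +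
      Nat.card ↥(Y ∩ {x | φ x ≠ c x}) ≤ p)
    (hu : some u ∉ importantUnion G Y (T1 ∪ T2) p) :
    ∃ ψ : V → Fin 2, IsExtension ψ T1 T2 ∧ cost G ψ ≤ k := by
  obtain ⟨A, hAD, huA, hA, hclosed⟩ := G.exists_connected_closed_of_mem (D := {x | φ x ≠ c x}) huc
  have hcut : cutCard (addApex G Y) (some '' A) ≤ p := by
    refine (cutCard_addApex_image_le A).trans (le_trans ?_ hp)
    gcongr
    · exact cutCard_le_card_edgeSet_badGraph_add_one hc hAD hclosed u v
    · exact Nat.card_mono (Set.toFinite _) (Set.inter_subset_inter_right Y hAD)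
  refine ⟨A.piecewise c φ, hφ.piecewise (disjoint_of_notMem_importantUnion hA huA hcut hu), ?_⟩
  exact (cost_le_cost_of_badGraph_le (badGraph_piecewise_le hc hclosed huA)).trans hcost

theorem SimpleGraph.Colorable.exists_card_inter_disagree_le [Finite V] {G : SimpleGraph V}
    (hG : G.Colorable 2) {Y : Set V} (hY : WellConnected G Y) {φ : V → Fin 2} {u v : V}
    (hYcard : 2 * (Nat.card (badGraph (G.deleteEdges {s(u, v)}) φ).edgeSet + 2) ≤ Nat.card Y) :
    ∃ c : V → Fin 2, (∀ a b, G.Adj a b → c a ≠ c b) ∧ Nat.card ↥(Y ∩ {x | φ x ≠ c x}) ≤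
      Nat.card (badGraph (G.deleteEdges {s(u, v)}) φ).edgeSet + 1 := by
  obtain ⟨c⟩ := hG
  have hcross : ∀ x y, G.Adj x y → φ x ≠ c x → ¬ φ y ≠ c y → x ≠ u → y ≠ u →
      s(x, y) ∈ (badGraph (G.deleteEdges {s(u, v)}) φ).edgeSet :=
    fun x y hxy hx hy hxu hyu => mem_edgeSet_badGraph_deleteEdges (fun a b h => c.valid h) hxy
      hx (not_not.1 hy) fun h => by rcases Sym2.eq_iff.1 h with ⟨h, -⟩ | ⟨-, h⟩ <;> contradiction
  rcases hY.card_inter_le_or_card_diff_le hcross hYcard with h | h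
  · exact ⟨c, fun a b h => c.valid h, h⟩
  · refine ⟨fun x => (c x).rev, fun a b h => Fin.rev_injective.ne (c.valid h), ?_⟩
    have key : ∀ p q : Fin 2, p ≠ q.rev ↔ ¬ p ≠ q := by decide
    rwa [show Y ∩ {x | φ x ≠ (c x).rev} = Y \ {x | φ x ≠ c x} from
      Set.ext fun x => and_congr_right fun _ => key _ _]

theorem stmt12_general {V : Type*} [Fintype V] (G : SimpleGraph V) (hbip : G.Colorable 2)
    (k t : ℕ) (hk : 1 ≤ k)
    (T1 T2 : Set V) (hne : (T1 ∪ T2).Nonempty)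
    (ht : Nat.card T1 + Nat.card T2 ≤ t)
    (Y : Set V) (hY : WellConnected G Y)
    (hYcard : 2 * (4 * k ^ 2) * t * 4 ^ (4 * k ^ 2) + 2 ≤ Nat.card Y)
    (u v : V) (huv : G.Adj u v)
    (hu : some u ∉ importantUnion G Y (T1 ∪ T2) (4 * k ^ 2))
    (hv : some v ∉ importantUnion G Y (T1 ∪ T2) (4 * k ^ 2)) :
    (∃ φ : V → Fin 2, IsExtension φ T1 T2 ∧ cost G φ ≤ k) ↔
    (∃ φ : V → Fin 2, IsExtension φ T1 T2 ∧ cost (G.deleteEdges {s(u, v)}) φ ≤ k) := by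
  refine ⟨fun ⟨φ, hφ, hcost⟩ => ⟨φ, hφ, (cost_le_cost_of_badGraph_le
    (badGraph_mono (G.deleteEdges_le _))).trans hcost⟩, fun ⟨φ, hφ, hcost⟩ => ?_⟩
  by_cases hφuv : φ u ≠ φ v
  · exact ⟨φ, hφ, (cost_le_cost_of_badGraph_le (badGraph_le_badGraph_deleteEdges hφuv)).trans hcost⟩
  set F := (badGraph (G.deleteEdges {s(u, v)}) φ).edgeSet
  have hF : 2 * Nat.card F + 2 ≤ 4 * k ^ 2 := two_mul_card_edgeSet_badGraph_add_two_le hk hcost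
  have ht1 : 1 ≤ t := by
    have := (Set.ncard_pos (Set.toFinite _)).2 hne
    have := Set.ncard_union_le T1 T2
    rw [Nat.card_coe_set_eq, Nat.card_coe_set_eq] at ht
    omega
  have hYF : 2 * (Nat.card F + 2) ≤ Nat.card Y := by
    have : 4 * k ^ 2 ≤ 4 * k ^ 2 * (2 * t * 4 ^ (4 * k ^ 2)) :=
      Nat.le_mul_of_pos_right _ (by positivity)
    linarith
  obtain ⟨c, hc, hYc⟩ : ∃ c : V → Fin 2, (∀ a b, G.Adj a b → c a ≠ c b) ∧
      Nat.card ↥(Y ∩ {x | φ x ≠ c x}) ≤ Nat.card F + 1 :=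
    hbip.exists_card_inter_disagree_le hY hYF
  have hp : Nat.card F + 1 + Nat.card ↥(Y ∩ {x | φ x ≠ c x}) ≤ 4 * k ^ 2 := by omega
  by_cases huc : φ u ≠ c u
  · exact exists_extension_cost_le_of_deleteEdges hc hφ hcost huc hp hu
  · have hvc : φ v ≠ c v := fun h => hc u v huv (not_not.1 huc ▸ h ▸ not_not.1 hφuv)
    have hswap : s(v, u) = s(u, v) := Sym2.eq_swap
    exact exists_extension_cost_le_of_deleteEdges hc hφ (hswap ▸ hcost) hvc (hswap ▸ hp) hv

/-- if `uv ∈ E(G)` with `u ∉ Z` and `v ∉ Z` (and `G - uv` connected), then `G`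
has a `(T₁,T₂)`-extension of cost at most `k` iff `G - uv` does. -/
theorem stmt12 {V : Type*} [Fintype V] (G : SimpleGraph V) (hbip : G.Colorable 2)
    (k t : ℕ) (hk : 1 ≤ k)
    (T1 T2 : Set V) (hdisj : Disjoint T1 T2) (hne : (T1 ∪ T2).Nonempty)
    (ht : Nat.card T1 + Nat.card T2 ≤ t)
    (Y : Set V) (hY : WellConnected G Y)
    (hYcard : 2 * (4 * k ^ 2) * t * 4 ^ (4 * k ^ 2) + 2 ≤ Nat.card Y)
    (u v : V) (huv : G.Adj u v)
    (hu : some u ∉ importantUnion G Y (T1 ∪ T2) (4 * k ^ 2))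
    (hv : some v ∉ importantUnion G Y (T1 ∪ T2) (4 * k ^ 2))
    (hconn : (G.deleteEdges {s(u, v)}).Connected) :
    (∃ φ : V → Fin 2, IsExtension φ T1 T2 ∧ cost G φ ≤ k) ↔
    (∃ φ : V → Fin 2, IsExtension φ T1 T2 ∧ cost (G.deleteEdges {s(u, v)}) φ ≤ k) :=
  stmt12_general G hbip k t hk T1 T2 hne ht Y hY hYcard u v huv hu hv
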